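/- arXiv:2109.02952 — 4 statements merged into one kernel-verified Lean document; each statement's English description precedes it below -/
import Mathlib

section
/- Let ρ be any 2×2 complex matrix and θ, θ' real numbers. Then Z(θ) ρ Z(θ)ᴴ + Z(θ+π) ρ Z(θ+π)ᴴ = Z(θ') ρ Z(θ')ᴴ + Z(θ'+π) ρ Z(θ'+π)ᴴ. -/
open Matrix

noncomputable def Zrot (θ : ℝ) : Matrix (Fin 2) (Fin 2) ℂ :=
  !![1, 0; 0, Complex.exp (θ * Complex.I)]

lemma zconj (θ : ℝ) : (Zrot θ)ᴴ = !![1, 0; 0, Complex.exp (-(θ * Complex.I))] := by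
  have hc : (starRingEnd ℂ) (Complex.exp ((θ:ℂ) * Complex.I)) =
      Complex.exp (-((θ:ℂ) * Complex.I)) := by
    rw [← Complex.exp_conj]
    congr 1
    rw [RingHom.map_mul, Complex.conj_I, Complex.conj_ofReal, mul_neg]
  ext i j
  fin_cases i <;> fin_cases j <;> simp [Zrot, hc]

lemma zsum (ρ : Matrix (Fin 2) (Fin 2) ℂ) (θ : ℝ) :
    Zrot θ * ρ * (Zrot θ)ᴴ + Zrot (θ + Real.pi) * ρ * (Zrot (θ + Real.pi))ᴴ =
      !![2 * ρ 0 0, 0; 0, 2 * ρ 1 1] := by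
  have h : Complex.exp ((↑(θ + Real.pi)) * Complex.I) = -Complex.exp (θ * Complex.I) := by
    push_cast
    rw [add_mul, Complex.exp_add, Complex.exp_pi_mul_I]
    ring
  have h' : Complex.exp (-((↑(θ + Real.pi)) * Complex.I)) =
      -Complex.exp (-((θ:ℂ) * Complex.I)) := by
    push_cast
    rw [show -(((θ:ℂ) + Real.pi) * Complex.I) = -((θ:ℂ) * Complex.I) + -((Real.pi:ℂ) * Complex.I) by ring,
      Complex.exp_add, Complex.exp_neg ((Real.pi:ℂ) * Complex.I), Complex.exp_pi_mul_I]
    norm_num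
  have hu : Complex.exp ((θ:ℂ) * Complex.I) * Complex.exp (-((θ:ℂ) * Complex.I)) = 1 := by
    rw [← Complex.exp_add]; simp
  rw [eta_fin_two ρ, zconj, zconj]
  simp only [Zrot, h, h', mul_fin_two]
  ext i j
  fin_cases i <;> fin_cases j <;> simp
  · ring
  · rw [mul_comm (Complex.exp ((θ:ℂ) * Complex.I)) (ρ 1 1), mul_assoc, hu, mul_one]
    ring


theorem stmt5 (ρ : Matrix (Fin 2) (Fin 2) ℂ) (θ θ' : ℝ) :
    Zrot θ * ρ * (Zrot θ)ᴴ + Zrot (θ + Real.pi) * ρ * (Zrot (θ + Real.pi))ᴴ =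
      Zrot θ' * ρ * (Zrot θ')ᴴ + Zrot (θ' + Real.pi) * ρ * (Zrot (θ' + Real.pi))ᴴ := by
  rw [zsum, zsum]
end

section
/- Let ρ' be a state on ℂ² ⊗ H of the form ρ' = |α|² |0⟩⟨0| ⊗ |ψ₀⟩⟨ψ₀| + α β̄ |0⟩⟨1| ⊗ |ψ₀⟩⟨ψ₁| + ᾱ β |1⟩⟨0| ⊗ |ψ₁⟩⟨ψ₀| + |β|² |1⟩⟨1| ⊗ |ψ₁⟩⟨ψ₁| for unit vectors ψ₀, ψ₁ ∈ H. Then for any θ, (Z(θ) ⊗ I) ρ' (Z(θ) ⊗ I)ᴴ + (Z(θ+π) ⊗ I) ρ' (Z(θ+π) ⊗ I)ᴴ = 2|α|² |0⟩⟨0| ⊗ |ψ₀⟩⟨ψ₀| + 2|β|² |1⟩⟨1| ⊗ |ψ₁⟩⟨ψ₁|; in particular this sum is independent of θ. -/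
open Matrix Kronecker

def ket0 : Fin 2 → ℂ := ![1, 0]
def ket1 : Fin 2 → ℂ := ![0, 1]

/-- outer product |u⟩⟨v| -/
def outer {m : Type*} (u v : m → ℂ) : Matrix m m ℂ :=
  Matrix.vecMulVec u (star v)

theorem stmt6 {n : Type*} [Fintype n] [DecidableEq n]
    (α β : ℂ) (hαβ : ‖α‖ ^ 2 + ‖β‖ ^ 2 = 1)
    (ψ₀ ψ₁ : n → ℂ)
    (hψ₀ : ∑ i, ‖ψ₀ i‖ ^ 2 = 1) (hψ₁ : ∑ i, ‖ψ₁ i‖ ^ 2 = 1)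
    (θ : ℝ)
    (ρ' : Matrix (Fin 2 × n) (Fin 2 × n) ℂ)
    (hρ' : ρ' = ((‖α‖ : ℂ) ^ 2) • (outer ket0 ket0 ⊗ₖ outer ψ₀ ψ₀)
        + (α * star β) • (outer ket0 ket1 ⊗ₖ outer ψ₀ ψ₁)
        + (star α * β) • (outer ket1 ket0 ⊗ₖ outer ψ₁ ψ₀)
        + ((‖β‖ : ℂ) ^ 2) • (outer ket1 ket1 ⊗ₖ outer ψ₁ ψ₁)) :
    ((Zrot θ) ⊗ₖ (1 : Matrix n n ℂ)) * ρ' * ((Zrot θ) ⊗ₖ (1 : Matrix n n ℂ))ᴴ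
      + ((Zrot (θ + Real.pi)) ⊗ₖ (1 : Matrix n n ℂ)) * ρ' *
          ((Zrot (θ + Real.pi)) ⊗ₖ (1 : Matrix n n ℂ))ᴴ =
    (2 * (‖α‖ : ℂ) ^ 2) • (outer ket0 ket0 ⊗ₖ outer ψ₀ ψ₀)
      + (2 * (‖β‖ : ℂ) ^ 2) • (outer ket1 ket1 ⊗ₖ outer ψ₁ ψ₁) := by
  have hkt : ∀ (A : Matrix (Fin 2) (Fin 2) ℂ) (B : Matrix n n ℂ),
      (A ⊗ₖ B)ᴴ = Aᴴ ⊗ₖ Bᴴ := by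
    intro A B
    ext ⟨i, k⟩ ⟨j, l⟩
    simp [conjTranspose_apply, kroneckerMap_apply]
  have key : ∀ φ : ℝ,
      ((Zrot φ) ⊗ₖ (1 : Matrix n n ℂ)) * ρ' * ((Zrot φ) ⊗ₖ (1 : Matrix n n ℂ))ᴴ
        = ((‖α‖ : ℂ) ^ 2) • (outer ket0 ket0 ⊗ₖ outer ψ₀ ψ₀)
          + ((starRingEnd ℂ) (Complex.exp (φ * Complex.I)) * (α * star β))
              • (outer ket0 ket1 ⊗ₖ outer ψ₀ ψ₁)
          + (Complex.exp (φ * Complex.I) * (star α * β))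
              • (outer ket1 ket0 ⊗ₖ outer ψ₁ ψ₀)
          + ((‖β‖ : ℂ) ^ 2) • (outer ket1 ket1 ⊗ₖ outer ψ₁ ψ₁) := by
    intro φ
    have h00 : Zrot φ * outer ket0 ket0 * (Zrot φ)ᴴ = outer ket0 ket0 := by
      ext i j
      fin_cases i <;> fin_cases j <;>
        simp [Zrot, outer, ket0, mul_apply, Fin.sum_univ_two, vecMulVec_apply, vecMul, dotProduct, Pi.star_apply, -vecMulVec_cons, -cons_vecMulVec]
    have h01 : Zrot φ * outer ket0 ket1 * (Zrot φ)ᴴ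
        = ((starRingEnd ℂ) (Complex.exp (φ * Complex.I))) • outer ket0 ket1 := by
      ext i j
      fin_cases i <;> fin_cases j <;>
        simp [Zrot, outer, ket0, ket1, mul_apply, Fin.sum_univ_two, vecMulVec_apply, vecMul, dotProduct, Pi.star_apply, -vecMulVec_cons, -cons_vecMulVec]
    have h10 : Zrot φ * outer ket1 ket0 * (Zrot φ)ᴴ
        = (Complex.exp (φ * Complex.I)) • outer ket1 ket0 := by
      ext i j
      fin_cases i <;> fin_cases j <;>
        simp [Zrot, outer, ket0, ket1, mul_apply, Fin.sum_univ_two, vecMulVec_apply, vecMul, dotProduct, Pi.star_apply, -vecMulVec_cons, -cons_vecMulVec]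
    have h11 : Zrot φ * outer ket1 ket1 * (Zrot φ)ᴴ = outer ket1 ket1 := by
      ext i j
      fin_cases i <;> fin_cases j <;>
        simp [Zrot, outer, ket1, mul_apply, Fin.sum_univ_two, vecMulVec_apply, vecMul, dotProduct, Pi.star_apply,
          ← Complex.exp_conj, ← Complex.exp_add, -vecMulVec_cons, -cons_vecMulVec]
    subst hρ'
    simp only [Matrix.mul_add, Matrix.add_mul, Matrix.mul_smul, Matrix.smul_mul, hkt,
      conjTranspose_one]
    simp only [← Matrix.mul_kronecker_mul, Matrix.one_mul, Matrix.mul_one]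
    rw [h00, h01, h10, h11]
    simp only [Matrix.smul_kronecker, smul_smul]
    module
  rw [key θ, key (θ + Real.pi)]
  have hexp : Complex.exp ((↑(θ + Real.pi) : ℂ) * Complex.I)
      = -Complex.exp ((θ : ℂ) * Complex.I) := by
    push_cast
    rw [add_mul, Complex.exp_add, Complex.exp_pi_mul_I]
    ring
  rw [hexp]
  simp only [map_neg]
  module
end

section
/- Let |φ'⟩ = (α|00⟩ + e^{−iθ}α|01⟩ + e^{iθ}β|10⟩ + β|11⟩)/√2. Then the partial trace over the second qubit of |φ'⟩⟨φ'| equals |α|²|0⟩⟨0| + e^{−iθ} α β̄ |0⟩⟨1| + e^{iθ} ᾱ β |1⟩⟨0| + |β|²|1⟩⟨1|, which equals Z(θ) ρ Z(θ)ᴴ where ρ is the density matrix of α|0⟩+β|1⟩. -/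
open Matrix

def vkron (u v : Fin 2 → ℂ) : Fin 2 × Fin 2 → ℂ := fun p => u p.1 * v p.2

/-- partial trace over the second qubit -/
noncomputable def ptrace2 (M : Matrix (Fin 2 × Fin 2) (Fin 2 × Fin 2) ℂ) : Matrix (Fin 2) (Fin 2) ℂ :=
  fun i j => ∑ k : Fin 2, M (i, k) (j, k)

theorem stmt11 (α β : ℂ) (h : ‖α‖ ^ 2 + ‖β‖ ^ 2 = 1) (θ : ℝ)
    (φ' : Fin 2 × Fin 2 → ℂ)
    (hφ' : φ' = ((Real.sqrt 2 : ℂ))⁻¹ •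
        (α • vkron ket0 ket0 + (Complex.exp (-θ * Complex.I) * α) • vkron ket0 ket1
          + (Complex.exp (θ * Complex.I) * β) • vkron ket1 ket0 + β • vkron ket1 ket1)) :
    ptrace2 (outer φ' φ') =
      !![(‖α‖ : ℂ) ^ 2, Complex.exp (-θ * Complex.I) * (α * star β);
         Complex.exp (θ * Complex.I) * (star α * β), (‖β‖ : ℂ) ^ 2] ∧
    ptrace2 (outer φ' φ') =
      Zrot θ * outer (α • ket0 + β • ket1) (α • ket0 + β • ket1) * (Zrot θ)ᴴ := by
  have h2 : ((Real.sqrt 2 : ℂ))⁻¹ * ((Real.sqrt 2 : ℂ))⁻¹ = 1/2 := by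
    rw [← mul_inv, ← Complex.ofReal_mul, Real.mul_self_sqrt (by norm_num)]
    norm_num
  have hsr : star ((Real.sqrt 2 : ℂ))⁻¹ = ((Real.sqrt 2 : ℂ))⁻¹ := by
    simp [Complex.star_def, Complex.conj_ofReal]
  have he : Complex.exp (θ * Complex.I) * Complex.exp (-(θ * Complex.I)) = 1 := by
    rw [← Complex.exp_add]; ring_nf; exact Complex.exp_zero
  have hs1 : star (Complex.exp (θ * Complex.I)) = Complex.exp (-θ * Complex.I) := by
    rw [Complex.star_def, ← Complex.exp_conj]; congr 1; simp [Complex.conj_ofReal]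
  have hs1' : (starRingEnd ℂ) (Complex.exp ((θ:ℂ) * Complex.I)) = Complex.exp (-((θ:ℂ) * Complex.I)) := by
    rw [← Complex.exp_conj]; congr 1; simp [Complex.conj_ofReal]
  have hs2 : (starRingEnd ℂ) (Complex.exp (-((θ:ℂ) * Complex.I))) = Complex.exp ((θ:ℂ) * Complex.I) := by
    rw [← Complex.exp_conj]; congr 1; simp [Complex.conj_ofReal]
  have ha : (‖α‖ : ℂ) ^ 2 = α * (starRingEnd ℂ) α := by
    norm_cast; rw [Complex.sq_norm, Complex.mul_conj]
  have hb : (‖β‖ : ℂ) ^ 2 = β * (starRingEnd ℂ) β := by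
    norm_cast; rw [Complex.sq_norm, Complex.mul_conj]
  have key : ptrace2 (outer φ' φ') =
      !![(‖α‖ : ℂ) ^ 2, Complex.exp (-θ * Complex.I) * (α * star β);
         Complex.exp (θ * Complex.I) * (star α * β), (‖β‖ : ℂ) ^ 2] := by
    subst hφ'
    ext i j
    fin_cases i <;> fin_cases j <;>
      simp [ptrace2, outer, vkron, ket0, ket1, vecMulVec_apply, Fin.sum_univ_two,
        hsr, hs1, star_mul'] <;>
      try rw [hs2]
    · rw [ha]
      linear_combination (α * (starRingEnd ℂ) α
          * (1 + Complex.exp (-((θ:ℂ) * Complex.I)) * Complex.exp ((θ:ℂ) * Complex.I))) * h2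
        + (α * (starRingEnd ℂ) α * (1/2)) * he
    · linear_combination (2 * Complex.exp (-((θ:ℂ) * Complex.I)) * α * (starRingEnd ℂ) β) * h2
    · linear_combination (2 * Complex.exp ((θ:ℂ) * Complex.I) * β * (starRingEnd ℂ) α) * h2
    · rw [hb]
      linear_combination (β * (starRingEnd ℂ) β
          * (1 + Complex.exp (-((θ:ℂ) * Complex.I)) * Complex.exp ((θ:ℂ) * Complex.I))) * h2
        + (β * (starRingEnd ℂ) β * (1/2)) * he
  refine ⟨key, ?_⟩
  rw [key]
  ext i j
  fin_cases i <;> fin_cases j <;>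
    simp only [Matrix.mul_apply, Fin.sum_univ_two, outer, vecMulVec_apply] <;>
    simp [Zrot, outer, ket0, ket1, vecMulVec_apply, Matrix.mul_apply, Matrix.vecMul,
      dotProduct, Fin.sum_univ_two, hs1, hs1', star_mul',
      Matrix.conjTranspose_apply]
  · exact ha
  · rw [Complex.exp_neg]
    field_simp
  · ring
  · rw [hb, Complex.exp_neg]
    field_simp
end

section
/- Let |φ'⟩ ∈ ℂ² ⊗ H ⊗ ℂ² be (α|0⟩|ψ₀⟩|0⟩ + e^{−iθ}α|0⟩|ψ₀⟩|1⟩ + e^{iθ}β|1⟩|ψ₁⟩|0⟩ + β|1⟩|ψ₁⟩|1⟩)/√2, with ψ₀, ψ₁ unit vectors in H and |α|²+|β|²=1. Tracing out the last qubit yields the state |α|²|0⟩⟨0|⊗|ψ₀⟩⟨ψ₀| + e^{−iθ} αβ̄ |0⟩⟨1|⊗|ψ₀⟩⟨ψ₁| + e^{iθ} ᾱβ |1⟩⟨0|⊗|ψ₁⟩⟨ψ₀| + |β|²|1⟩⟨1|⊗|ψ₁⟩⟨ψ₁|, which equals (Z(θ)⊗I) ρ' (Z(θ)⊗I)ᴴ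 where ρ' is the density matrix of α|0⟩|ψ₀⟩+β|1⟩|ψ₁⟩. -/
set_option maxHeartbeats 1000000


open Matrix Kronecker

/-- tensor product of three vectors -/
def vkron3 {n : Type*} (u : Fin 2 → ℂ) (v : n → ℂ) (w : Fin 2 → ℂ) :
    Fin 2 × n × Fin 2 → ℂ := fun p => u p.1 * v p.2.1 * w p.2.2

def vkron2 {n : Type*} (u : Fin 2 → ℂ) (v : n → ℂ) : Fin 2 × n → ℂ :=
  fun p => u p.1 * v p.2

/-- partial trace over the last qubit -/
noncomputable def ptraceLast {n : Type*} [Fintype n]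
    (M : Matrix (Fin 2 × n × Fin 2) (Fin 2 × n × Fin 2) ℂ) : Matrix (Fin 2 × n) (Fin 2 × n) ℂ :=
  fun i j => ∑ k : Fin 2, M (i.1, i.2, k) (j.1, j.2, k)

theorem stmt19 {n : Type*} [Fintype n] [DecidableEq n]
    (α β : ℂ) (hαβ : ‖α‖ ^ 2 + ‖β‖ ^ 2 = 1)
    (ψ₀ ψ₁ : n → ℂ)
    (hψ₀ : ∑ i, ‖ψ₀ i‖ ^ 2 = 1) (hψ₁ : ∑ i, ‖ψ₁ i‖ ^ 2 = 1)
    (θ : ℝ)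
    (φ' : Fin 2 × n × Fin 2 → ℂ)
    (hφ' : φ' = ((Real.sqrt 2 : ℂ))⁻¹ •
        (α • vkron3 ket0 ψ₀ ket0 + (Complex.exp (-θ * Complex.I) * α) • vkron3 ket0 ψ₀ ket1
          + (Complex.exp (θ * Complex.I) * β) • vkron3 ket1 ψ₁ ket0
          + β • vkron3 ket1 ψ₁ ket1)) :
    ptraceLast (outer φ' φ') =
      ((‖α‖ : ℂ) ^ 2) • (outer ket0 ket0 ⊗ₖ outer ψ₀ ψ₀)
        + (Complex.exp (-θ * Complex.I) * (α * star β)) • (outer ket0 ket1 ⊗ₖ outer ψ₀ ψ₁)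
        + (Complex.exp (θ * Complex.I) * (star α * β)) • (outer ket1 ket0 ⊗ₖ outer ψ₁ ψ₀)
        + ((‖β‖ : ℂ) ^ 2) • (outer ket1 ket1 ⊗ₖ outer ψ₁ ψ₁) ∧
    ptraceLast (outer φ' φ') =
      ((Zrot θ) ⊗ₖ (1 : Matrix n n ℂ)) *
        outer (α • vkron2 ket0 ψ₀ + β • vkron2 ket1 ψ₁)
              (α • vkron2 ket0 ψ₀ + β • vkron2 ket1 ψ₁) *
        ((Zrot θ) ⊗ₖ (1 : Matrix n n ℂ))ᴴ := by
  have ha : ((‖α‖ : ℂ)) ^ 2 = α * star α := by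
    rw [← Complex.ofReal_pow, Complex.sq_norm]
    exact (Complex.mul_conj α).symm
  have hb : ((‖β‖ : ℂ)) ^ 2 = β * star β := by
    rw [← Complex.ofReal_pow, Complex.sq_norm]
    exact (Complex.mul_conj β).symm
  have he : Complex.exp (-θ * Complex.I) * Complex.exp (θ * Complex.I) = 1 := by
    rw [← Complex.exp_add]; ring_nf; exact Complex.exp_zero
  have hce : (starRingEnd ℂ) (Complex.exp ((θ : ℂ) * Complex.I)) = Complex.exp (-((θ : ℂ) * Complex.I)) := by
    rw [← Complex.exp_conj]; congr 1; simp [Complex.conj_ofReal]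
  have hce' : (starRingEnd ℂ) (Complex.exp (-((θ : ℂ) * Complex.I))) = Complex.exp ((θ : ℂ) * Complex.I) := by
    rw [← Complex.exp_conj]; congr 1; simp [Complex.conj_ofReal]
  have he4 : Complex.exp (-((θ : ℂ) * Complex.I)) * Complex.exp ((θ : ℂ) * Complex.I) = 1 := by
    rw [← Complex.exp_add]; ring_nf; exact Complex.exp_zero
  have he5 : Complex.exp ((θ : ℂ) * Complex.I) * Complex.exp (-((θ : ℂ) * Complex.I)) = 1 := by
    rw [mul_comm]; exact he4
  have hs : (starRingEnd ℂ) (((Real.sqrt 2 : ℝ) : ℂ))⁻¹ = ((Real.sqrt 2 : ℝ) : ℂ)⁻¹ := by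
    simp [Complex.conj_ofReal]
  have he2 : Complex.exp (-(Complex.I * θ)) * Complex.exp (Complex.I * θ) = 1 := by
    rw [← Complex.exp_add]; ring_nf; exact Complex.exp_zero
  have he3 : Complex.exp (Complex.I * θ) * Complex.exp (-(Complex.I * θ)) = 1 := by
    rw [mul_comm]; exact he2
  have hne : Complex.exp ((θ : ℂ) * Complex.I) ≠ 0 := Complex.exp_ne_zero _
  have hinv2 : Complex.exp (-(Complex.I * (θ : ℂ))) = (Complex.exp (Complex.I * (θ : ℂ)))⁻¹ :=
    Complex.exp_neg _
  have hinv : Complex.exp (-((θ : ℂ) * Complex.I)) = (Complex.exp ((θ : ℂ) * Complex.I))⁻¹ :=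
    Complex.exp_neg _
  have hne2 : ((Real.sqrt 2 : ℝ) : ℂ) ≠ 0 := by
    simpa using (by positivity : Real.sqrt 2 ≠ 0)
  have hsq : ((Real.sqrt 2 : ℝ) : ℂ) ^ 2 = 2 := by
    rw [sq, ← Complex.ofReal_mul, Real.mul_self_sqrt (by norm_num)]
    norm_num
  have hsq4 : ((Real.sqrt 2 : ℝ) : ℂ) ^ 4 = 4 := by
    calc ((Real.sqrt 2 : ℝ) : ℂ) ^ 4 = (((Real.sqrt 2 : ℝ) : ℂ) ^ 2) ^ 2 := by ring
      _ = 2 ^ 2 := by rw [hsq]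
      _ = 4 := by norm_num
  have hs2 : ((Real.sqrt 2 : ℝ) : ℂ)⁻¹ ^ 2 = (2 : ℂ)⁻¹ := by
    rw [sq, ← mul_inv, ← Complex.ofReal_mul, Real.mul_self_sqrt (by norm_num)]
    norm_num
  have h1 : ptraceLast (outer φ' φ') =
      ((‖α‖ : ℂ) ^ 2) • (outer ket0 ket0 ⊗ₖ outer ψ₀ ψ₀)
        + (Complex.exp (-θ * Complex.I) * (α * star β)) • (outer ket0 ket1 ⊗ₖ outer ψ₀ ψ₁)
        + (Complex.exp (θ * Complex.I) * (star α * β)) • (outer ket1 ket0 ⊗ₖ outer ψ₁ ψ₀)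
        + ((‖β‖ : ℂ) ^ 2) • (outer ket1 ket1 ⊗ₖ outer ψ₁ ψ₁) := by
    rw [ha, hb]
    ext ⟨i, x⟩ ⟨j, y⟩
    fin_cases i <;> fin_cases j <;>
      simp [ptraceLast, outer, vecMulVec_apply, hφ', vkron3, ket0, ket1,
        Fin.sum_univ_two, Matrix.kroneckerMap_apply, Pi.star_apply, Pi.smul_apply,
        Pi.add_apply, smul_eq_mul, _root_.map_mul, map_add, Complex.star_def, neg_mul,
        hce, hce', hs, Matrix.cons_val_zero, Matrix.cons_val_one, Matrix.head_cons,
        mul_zero, zero_mul, mul_one, one_mul, add_zero, zero_add,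
        Matrix.smul_apply, Matrix.add_apply, -Matrix.cons_vecMulVec]
    all_goals (try simp only [hinv])
    all_goals field_simp [hsq, hne2]
    all_goals ring_nf
    all_goals (try simp only [hsq4, hsq])
    all_goals (try ring)
  refine ⟨h1, h1.trans ?_⟩
  rw [ha, hb]
  ext ⟨i, x⟩ ⟨j, y⟩
  fin_cases i <;> fin_cases j <;>
    simp [Matrix.mul_apply, Fintype.sum_prod_type, Matrix.kroneckerMap_apply,
      Matrix.conjTranspose_apply, Matrix.one_apply, Zrot, outer, vecMulVec_apply,
      vkron2, ket0, ket1, Fin.sum_univ_two, Pi.star_apply, Pi.add_apply, Pi.smul_apply,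
      smul_eq_mul, _root_.map_mul, map_add, Complex.star_def, neg_mul,
      hce, hce', hs, Finset.mul_sum, Finset.sum_mul, Finset.sum_ite_eq, Finset.sum_ite_eq',
      apply_ite (starRingEnd ℂ), map_zero,
      mul_ite, ite_mul, mul_zero, zero_mul, mul_one, one_mul,
      Matrix.smul_apply, Matrix.add_apply, -Matrix.cons_vecMulVec]
  all_goals (try simp only [hinv])
  all_goals (try field_simp [hsq, hne2])
  all_goals ring_nf
  all_goals (try simp only [hsq4, hsq])
  all_goals (try ring)
end
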